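/- arXiv:math/0703213 — 6 statements merged into one kernel-verified Lean document; each statement's English description precedes it below -/
import Mathlib

section
/- Let A be an m×m matrix with entries in a commutative ring, let n < m, let A₀ be the top-left n×n submatrix, and for n < i,j ≤ m let b_{ij} be the determinant of the (n+1)×(n+1) matrix formed by bordering A₀ with row i (restricted to the first n columns), column j (restricted to the first n rows), and entry a_{ij}. Let B = (b_{ij})_{n+1 ≤ i,j ≤ m}. Then det(A) · (det A₀)^{m-n-1} = det B. -/
/-!
If the top-left block `A₀` is invertible, let `S = A₃ - A₂ A₀⁻¹ A₁` be its Schur complement, so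
`det A = det A₀ * det S`. Each bordered minor is the determinant of a matrix whose top-left block is
again `A₀`, and its Schur complement is the `1 × 1` matrix `S k l`; hence `B = det A₀ • S` and
`det B = (det A₀)^(m-n) * det S`. For an arbitrary commutative ring, specialise the generic matrix
over `ℤ[x_ij]`: there `det A₀` is a nonzero polynomial, hence a unit in the fraction field.
-/

open Matrix

namespace Matrix

theorem submatrix_sumMap_id {ι κ α β R : Type*} (A : Matrix (ι ⊕ κ) (ι ⊕ κ) R) (f : α → κ)
    (g : β → κ) :
    A.submatrix (Sum.map id f) (Sum.map id g) =
      fromBlocks A.toBlocks₁₁ (A.toBlocks₁₂.submatrix id g) (A.toBlocks₂₁.submatrix f id)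
        (A.toBlocks₂₂.submatrix f g) := by
  ext (i | i) (j | j) <;> rfl

theorem toBlocks₁₁_map {ι κ α β : Type*} (A : Matrix (ι ⊕ κ) (ι ⊕ κ) α) (f : α → β) :
    (A.map f).toBlocks₁₁ = A.toBlocks₁₁.map f :=
  rfl

theorem det_toBlocks₁₁_mvPolynomialX_ne_zero (ι κ R : Type*) [Fintype ι] [DecidableEq ι]
    [DecidableEq κ] [CommRing R] [Nontrivial R] :
    det (mvPolynomialX (ι ⊕ κ) (ι ⊕ κ) R).toBlocks₁₁ ≠ 0 := by
  intro h
  have h1 := congr_arg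
    (MvPolynomial.eval₂Hom (RingHom.id R) fun p => (1 : Matrix (ι ⊕ κ) (ι ⊕ κ) R) p.1 p.2) h
  rw [RingHom.map_det, RingHom.mapMatrix_apply, map_zero, ← toBlocks₁₁_map,
    MvPolynomial.coe_eval₂Hom, mvPolynomialX_map_eval₂, ← fromBlocks_one, toBlocks_fromBlocks₁₁,
    det_one] at h1
  exact one_ne_zero h1

variable {ι κ R S : Type*} [Fintype ι] [DecidableEq ι] [CommRing R] [CommRing S]

/-- `borderedMinors A k l` is the paper's `b_{kl}`: the `ι`-block bordered by row `k` and
column `l`. -/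
def borderedMinors (A : Matrix (ι ⊕ κ) (ι ⊕ κ) R) : Matrix κ κ R :=
  of fun k l => det (A.submatrix (Sum.map id fun _ : Fin 1 => k) (Sum.map id fun _ : Fin 1 => l))

theorem borderedMinors_map (f : R →+* S) (A : Matrix (ι ⊕ κ) (ι ⊕ κ) R) :
    borderedMinors (A.map f) = (borderedMinors A).map f := by
  ext k l
  simp [borderedMinors, RingHom.map_det, submatrix_map]

theorem borderedMinors_of_invertible (A : Matrix (ι ⊕ κ) (ι ⊕ κ) R)
    [Invertible A.toBlocks₁₁] :
    borderedMinors A =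
      det A.toBlocks₁₁ • (A.toBlocks₂₂ - A.toBlocks₂₁ * ⅟A.toBlocks₁₁ * A.toBlocks₁₂) := by
  ext k l
  rw [borderedMinors, of_apply, submatrix_sumMap_id, det_fromBlocks₁₁, det_fin_one]
  simp [mul_apply]

variable [Fintype κ] [DecidableEq κ]

theorem det_mul_det_toBlocks₁₁_pow_of_invertible [Nonempty κ] (A : Matrix (ι ⊕ κ) (ι ⊕ κ) R)
    [Invertible A.toBlocks₁₁] :
    det A * det A.toBlocks₁₁ ^ (Fintype.card κ - 1) = det (borderedMinors A) := by
  obtain ⟨p, hp⟩ := Nat.exists_eq_add_one_of_ne_zero (Fintype.card_ne_zero (α := κ))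
  calc det A * det A.toBlocks₁₁ ^ (Fintype.card κ - 1)
      = det (fromBlocks A.toBlocks₁₁ A.toBlocks₁₂ A.toBlocks₂₁ A.toBlocks₂₂) *
          det A.toBlocks₁₁ ^ (Fintype.card κ - 1) := by rw [fromBlocks_toBlocks]
    _ = det (borderedMinors A) := by
      rw [det_fromBlocks₁₁, borderedMinors_of_invertible, det_smul, hp, Nat.add_sub_cancel,
        pow_succ]
      ring

theorem det_mul_det_toBlocks₁₁_pow [Nonempty κ] (A : Matrix (ι ⊕ κ) (ι ⊕ κ) R) :
    det A * det A.toBlocks₁₁ ^ (Fintype.card κ - 1) = det (borderedMinors A) := by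
  let M := mvPolynomialX (ι ⊕ κ) (ι ⊕ κ) ℤ
  let φ := algebraMap (MvPolynomial ((ι ⊕ κ) × (ι ⊕ κ)) ℤ)
    (FractionRing (MvPolynomial ((ι ⊕ κ) × (ι ⊕ κ)) ℤ))
  have hφ : Function.Injective φ := IsFractionRing.injective _ _
  have : Invertible (M.map φ).toBlocks₁₁ := by
    refine invertibleOfIsUnitDet _ (isUnit_iff_ne_zero.mpr ?_)
    rw [toBlocks₁₁_map, ← RingHom.mapMatrix_apply, ← RingHom.map_det]
    exact (map_ne_zero_iff φ hφ).mpr (det_toBlocks₁₁_mvPolynomialX_ne_zero ι κ ℤ)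
  have generic : det M * det M.toBlocks₁₁ ^ (Fintype.card κ - 1) = det (borderedMinors M) :=
    hφ <| by
      simp only [map_mul, map_pow, RingHom.map_det, RingHom.mapMatrix_apply, ← toBlocks₁₁_map,
        ← borderedMinors_map]
      exact det_mul_det_toBlocks₁₁_pow_of_invertible (M.map φ)
  have h := congr_arg (MvPolynomial.eval₂Hom (Int.castRingHom R) fun p => A p.1 p.2) generic
  simp only [map_mul, map_pow, RingHom.map_det, RingHom.mapMatrix_apply, ← toBlocks₁₁_map,
    ← borderedMinors_map] at h
  rwa [MvPolynomial.coe_eval₂Hom, mvPolynomialX_map_eval₂] at h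

end Matrix

/-- Classical Sylvester determinantal identity (Bareiss form).
`A₀` is the top-left `n × n` block of the `m × m` matrix `A`; for indices
`i, j` with `n ≤ i, j < m` (0-indexed version of `n < i, j ≤ m`), `b i j` is the
determinant of the `(n+1) × (n+1)` matrix obtained by bordering `A₀` with row `i`
(restricted to the first `n` columns), column `j` (restricted to the first `n`
rows) and the entry `A i j`.  Then `det A * (det A₀)^(m-n-1) = det B`. -/
theorem sylvester_identity {R : Type*} [CommRing R] (m n : ℕ) (hn : n < m)
    (A : Matrix (Fin m) (Fin m) R) :
    -- embedding of the "high" indices n, n+1, ..., m-1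
    let e : Fin (m - n) → Fin m := fun k => ⟨n + (k : ℕ), by have := k.isLt; omega⟩
    -- row/column index system of the bordered matrix: 0, 1, ..., n-1, i
    let bi : Fin m → Fin (n + 1) → Fin m := fun i r =>
      if h : (r : ℕ) < n then ⟨(r : ℕ), h.trans hn⟩ else i
    -- the top-left n × n submatrix
    let A₀ : Matrix (Fin n) (Fin n) R := A.submatrix (Fin.castLE hn.le) (Fin.castLE hn.le)
    -- B, the matrix of bordered determinants
    let B : Matrix (Fin (m - n)) (Fin (m - n)) R :=
      Matrix.of fun k l => (A.submatrix (bi (e k)) (bi (e l))).det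
    A.det * A₀.det ^ (m - n - 1) = B.det := by
  intro e bi A₀ B
  let σ : Fin n ⊕ Fin (m - n) ≃ Fin m := finSumFinEquiv.trans (finCongr (by omega))
  have : Nonempty (Fin (m - n)) := ⟨⟨0, by omega⟩⟩
  have hbi (k : Fin (m - n)) : bi (e k) ∘ finSumFinEquiv = σ ∘ Sum.map id fun _ : Fin 1 => k := by
    ext (i | i) <;> simp [bi, σ, e]
  have hA₀ : (A.submatrix σ σ).toBlocks₁₁ = A₀ := rfl
  have hB : borderedMinors (A.submatrix σ σ) = B := by
    ext k l
    rw [borderedMinors, of_apply, submatrix_submatrix, ← hbi k, ← hbi l, ← submatrix_submatrix,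
      det_submatrix_equiv_self]
    rfl
  have h := det_mul_det_toBlocks₁₁_pow (A.submatrix σ σ)
  rwa [det_submatrix_equiv_self, hA₀, hB, Fintype.card_fin] at h
end

section
/- Let A = (a_{ij})_{m×m} be a Cartier-Foata matrix (entries in a noncommutative ring satisfying a_{ik}a_{jl} = a_{jl}a_{ik} for i ≠ j). Then for all i,j, ((I-A)^{-1})_{ij} = (-1)^{i+j} (det(I-A))^{-1} · det((I-A)^{ji}), where det is the noncommutative determinant det B = Σ_{σ∈S_m} (-1)^{inv σ} b_{σ(1)1}⋯b_{σ(m)m} and (I-A)^{ji} denotes I-A with row j and column i removed. -/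
/-!
Write `M` for the generic matrix `(X (i, j))` over `ℤ[X (i, j)]`. Sending a monomial to the product
of the corresponding entries of `B` is well defined (order-independent) on monomials whose
variables lie in distinct rows, because entries of `B` in distinct rows commute; extended
additively it carries every term of `det M` and of `(adjugate M * M) i l` to the matching term
of the noncommutative `ncdet`. Hence the commutative identity `adjugate M * M = det M • 1`
transports to `ncadjugate B * B = ncdet B • 1` for every Cartier–Foata `B`. Applied to
`B = 1 - A`, `d • ncadjugate B` is a left inverse of `B`, so it equals the right inverse `X`.
-/

/-- The non-commutative (column-expansion) determinant
`det B = Σ_σ (-1)^{inv σ} b_{σ(1)1} b_{σ(2)2} ⋯ b_{σ(m)m}`. -/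
noncomputable def ncdet {R : Type*} [Ring R] {k : ℕ} (B : Matrix (Fin k) (Fin k) R) : R :=
  ∑ σ : Equiv.Perm (Fin k),
    ((Equiv.Perm.sign σ : ℤ)) • (List.ofFn fun j => B (σ j) j).prod

open MvPolynomial

theorem MvPolynomial.prod_map_X_eq_monomial {σ S : Type*} [DecidableEq σ] [CommSemiring S]
    (ps : List σ) :
    (ps.map X).prod = monomial (Multiset.toFinsupp (ps : Multiset σ)) (1 : S) := by
  induction ps with
  | nil => simp [monomial_zero']
  | cons p ps ih =>
    rw [List.map_cons, List.prod_cons, ih, ← Multiset.cons_coe, ← Multiset.singleton_add,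
      Multiset.toFinsupp_add, Multiset.toFinsupp_singleton, X, monomial_mul, one_mul]

namespace Matrix

variable {ι R : Type*} [Ring R]

def IsCartierFoata (B : Matrix ι ι R) : Prop :=
  ∀ i j k l, i ≠ j → Commute (B i k) (B j l)

theorem IsCartierFoata.one_sub [DecidableEq ι] {B : Matrix ι ι R} (hB : B.IsCartierFoata) :
    (1 - B).IsCartierFoata := by
  have hone : ∀ p q (x : R), Commute ((1 : Matrix ι ι R) p q) x := fun p q x => by
    rw [one_apply]; split_ifs
    exacts [Commute.one_left x, Commute.zero_left x]
  intro i j k l hij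
  exact (hone i k _).sub_left ((hone j l _).symm.sub_right (hB i j k l hij))

open scoped Classical in
/-- Junk value `0` unless the entries of the monomial commute pairwise. -/
noncomputable def evalMonomial (B : Matrix ι ι R) (s : (ι × ι) →₀ ℕ) : R :=
  if h : {x | x ∈ s.toMultiset.map fun p => B p.1 p.2}.Pairwise Commute then
    (s.toMultiset.map fun p => B p.1 p.2).noncommProd h
  else 0

noncomputable def evalPoly (B : Matrix ι ι R) : MvPolynomial (ι × ι) ℤ →+ R :=
  AddMonoidAlgebra.liftNC (Int.castAddHom R) fun s => evalMonomial B s.toAdd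

theorem evalPoly_monomial (B : Matrix ι ι R) (s : (ι × ι) →₀ ℕ) (c : ℤ) :
    evalPoly B (monomial s c) = c • evalMonomial B s := by
  rw [← single_eq_monomial, evalPoly, AddMonoidAlgebra.liftNC_single, zsmul_eq_mul]
  rfl

theorem evalPoly_prod_X {B : Matrix ι ι R} (hB : B.IsCartierFoata) {ps : List (ι × ι)}
    (hps : (ps.map Prod.fst).Nodup) :
    evalPoly B (ps.map X).prod = (ps.map fun p => B p.1 p.2).prod := by
  have hcomm : {x | x ∈ ((ps.map fun p => B p.1 p.2 : List R) : Multiset R)}.Pairwise Commute := by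
    intro x hx y hy hne
    rw [Set.mem_ofPred_eq, Multiset.mem_coe, List.mem_map] at hx hy
    obtain ⟨p, hp, rfl⟩ := hx
    obtain ⟨q, hq, rfl⟩ := hy
    exact hB _ _ _ _ fun h => hne (by rw [List.inj_on_of_nodup_map hps hp hq h])
  classical
  rw [prod_map_X_eq_monomial, evalPoly_monomial, one_smul, evalMonomial,
    Multiset.toFinsupp_toMultiset, Multiset.map_coe, dif_pos hcomm, Multiset.noncommProd_coe]

theorem evalPoly_det_submatrix_mul_prod_X {n k : ℕ} {B : Matrix (Fin n) (Fin n) R}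
    (hB : B.IsCartierFoata) {f : Fin k → Fin n} (hf : Function.Injective f) (g : Fin k → Fin n)
    {qs : List (Fin n × Fin n)} (hqs : (qs.map Prod.fst).Nodup) (hdisj : ∀ c, ∀ q ∈ qs, f c ≠ q.1) :
    evalPoly B (((mvPolynomialX (Fin n) (Fin n) ℤ).submatrix f g).det * (qs.map X).prod)
      = ncdet (B.submatrix f g) * (qs.map fun p => B p.1 p.2).prod := by
  rw [det_apply, Finset.sum_mul, map_sum, ncdet, Finset.sum_mul]
  refine Finset.sum_congr rfl fun σ _ => ?_
  let ps := (List.finRange k).map fun c => (f (σ c), g c)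
  have hps : (ps ++ qs).map Prod.fst |>.Nodup := by
    rw [List.map_append, List.nodup_append, List.map_map]
    refine ⟨(List.nodup_finRange k).map fun c c' h => σ.injective (hf h), hqs, ?_⟩
    intro x hx y hy hxy
    obtain ⟨c, -, rfl⟩ := List.mem_map.mp hx
    obtain ⟨q, hq, rfl⟩ := List.mem_map.mp hy
    exact hdisj (σ c) q hq hxy
  have hprod : (∏ c, (mvPolynomialX (Fin n) (Fin n) ℤ).submatrix f g (σ c) c) * (qs.map X).prod
      = ((ps ++ qs).map X).prod := by
    rw [List.map_append, List.prod_append, List.map_map]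
    rfl
  rw [Units.smul_def, smul_mul_assoc, map_zsmul, smul_mul_assoc, hprod, evalPoly_prod_X hB hps,
    List.map_append, List.prod_append, List.map_map, List.ofFn_eq_map]
  rfl

theorem evalPoly_det_mvPolynomialX {n : ℕ} {B : Matrix (Fin n) (Fin n) R} (hB : B.IsCartierFoata) :
    evalPoly B (mvPolynomialX (Fin n) (Fin n) ℤ).det = ncdet B := by
  simpa using evalPoly_det_submatrix_mul_prod_X hB Function.injective_id id (qs := [])
    List.nodup_nil (by simp)

noncomputable def ncadjugate {n : ℕ} (B : Matrix (Fin (n + 1)) (Fin (n + 1)) R) :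
    Matrix (Fin (n + 1)) (Fin (n + 1)) R :=
  of fun i j => ((-1 : ℤ) ^ ((i : ℕ) + (j : ℕ))) • ncdet (B.submatrix j.succAbove i.succAbove)

theorem evalPoly_adjugate_mul_X {n : ℕ} {B : Matrix (Fin (n + 1)) (Fin (n + 1)) R}
    (hB : B.IsCartierFoata) (i j l : Fin (n + 1)) :
    evalPoly B ((mvPolynomialX (Fin (n + 1)) (Fin (n + 1)) ℤ).adjugate i j * X (j, l))
      = ncadjugate B i j * B j l := by
  have h := evalPoly_det_submatrix_mul_prod_X hB (Fin.succAbove_right_injective (p := j))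
    i.succAbove (qs := [(j, l)]) (by simp) (by simp [Fin.succAbove_ne])
  simp only [List.map_cons, List.map_nil, List.prod_singleton] at h
  have hsign (p : MvPolynomial (Fin (n + 1) × Fin (n + 1)) ℤ) :
      (-1) ^ ((j : ℕ) + i) * p = ((-1 : ℤ) ^ ((i : ℕ) + j)) • p := by
    rw [zsmul_eq_mul, add_comm (i : ℕ)]; push_cast; rfl
  rw [adjugate_fin_succ_eq_det_submatrix, mul_assoc, hsign, map_zsmul, h, ncadjugate, of_apply,
    smul_mul_assoc]

theorem ncadjugate_mul {n : ℕ} {B : Matrix (Fin (n + 1)) (Fin (n + 1)) R}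
    (hB : B.IsCartierFoata) : ncadjugate B * B = ncdet B • (1 : Matrix _ _ R) := by
  ext i l
  have h := congrArg (fun M => evalPoly B (M i l))
    (adjugate_mul (mvPolynomialX (Fin (n + 1)) (Fin (n + 1)) ℤ))
  simp only [mul_apply, map_sum, mvPolynomialX_apply, evalPoly_adjugate_mul_X hB] at h
  rw [mul_apply, h, smul_apply, smul_apply, one_apply, one_apply]
  split_ifs
  · simp [evalPoly_det_mvPolynomialX hB]
  · simp

end Matrix

theorem cartier_foata_inverse_entries_general {R : Type*} [Ring R] (m : ℕ)
    (a : Matrix (Fin (m + 1)) (Fin (m + 1)) R)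
    (hcf : ∀ i j k l : Fin (m + 1), i ≠ j → a i k * a j l = a j l * a i k)
    (X : Matrix (Fin (m + 1)) (Fin (m + 1)) R)
    (hX1 : (1 - a) * X = 1)
    (d : R) (hd1 : d * ncdet (1 - a) = 1) :
    ∀ i j : Fin (m + 1),
      X i j = ((-1 : ℤ) ^ ((i : ℕ) + (j : ℕ))) •
        (d * ncdet ((1 - a).submatrix j.succAbove i.succAbove)) := by
  have hB : (1 - a).IsCartierFoata := Matrix.IsCartierFoata.one_sub hcf
  have hleft : (d • (1 - a).ncadjugate) * (1 - a) = 1 := by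
    rw [Matrix.smul_mul, Matrix.ncadjugate_mul hB, smul_smul, hd1, one_smul]
  have hX : X = d • (1 - a).ncadjugate := (left_inv_eq_right_inv hleft hX1).symm
  intro i j
  rw [hX, Matrix.smul_apply, Matrix.ncadjugate, Matrix.of_apply, smul_eq_mul, mul_smul_comm]

/-- Cartier–Foata master-theorem-type inversion formula: for a Cartier–Foata matrix `A`
(`a_{ik} a_{jl} = a_{jl} a_{ik}` for `i ≠ j`), with `X` a two-sided inverse of `I - A`
and `d` a two-sided inverse of `det (I - A)` (both exist in the completed algebra),
`((I-A)⁻¹)_{ij} = (-1)^{i+j} (det (I-A))⁻¹ · det ((I-A)^{ji})`,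
where `(I-A)^{ji}` is `I - A` with row `j` and column `i` removed. -/
theorem cartier_foata_inverse_entries {R : Type*} [Ring R] (m : ℕ)
    (a : Matrix (Fin (m + 1)) (Fin (m + 1)) R)
    (hcf : ∀ i j k l : Fin (m + 1), i ≠ j → a i k * a j l = a j l * a i k)
    (X : Matrix (Fin (m + 1)) (Fin (m + 1)) R)
    (hX1 : (1 - a) * X = 1) (hX2 : X * (1 - a) = 1)
    (d : R) (hd1 : d * ncdet (1 - a) = 1) (hd2 : ncdet (1 - a) * d = 1) :
    ∀ i j : Fin (m + 1),
      X i j = ((-1 : ℤ) ^ ((i : ℕ) + (j : ℕ))) •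
        (d * ncdet ((1 - a).submatrix j.succAbove i.succAbove)) :=
  cartier_foata_inverse_entries_general m a hcf X hX1 d hd1
end

section
/- Let A = (a_{ij})_{m×m} be a right-quantum matrix: a_{jk}a_{ik} = a_{ik}a_{jk} for i ≠ j, and a_{ik}a_{jl} - a_{jk}a_{il} = a_{jl}a_{ik} - a_{il}a_{jk} for i ≠ j, k ≠ l. Then ((I-A)^{-1})_{ij} = (-1)^{i+j} (det(I-A))^{-1} · det((I-A)^{ji}) for all i,j, with det the column-expansion noncommutative determinant. -/
/-!
For a right-quantum matrix `B` the column-expansion determinant is alternating in the columns: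
the defining relations make the terms of `σ` and `σ * swap c (c + 1)` cancel in pairs, so swapping
two adjacent columns changes the sign and two equal adjacent columns give `0`. Adjacent
transpositions generate the symmetric group, so this extends to all column permutations and all
pairs of equal columns. Moving column `i` to the end and expanding along the last column then
gives the left cofactor identity `adj B * B = diag (det B)`; the order matters, as the cofactor
stands to the left of the entry `B k j`. For `B = 1 - A`, `(det B)⁻¹ • adj B` is a left inverse
of `B`, hence equal to its right inverse `X`.
-/

open Equiv Equiv.Perm

theorem List.prod_ofFn_split_adjacent {M : Type*} [Monoid M] {n : ℕ} (F G : Fin (n + 1) → M)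
    (i : Fin n) (hFG : ∀ t, t ≠ i.castSucc → t ≠ i.succ → F t = G t) :
    (List.ofFn F).prod = ((List.ofFn G).take i).prod *
      (F i.castSucc * (F i.succ * ((List.ofFn G).drop (i + 2)).prod)) := by
  have hi : (i : ℕ) + 1 < (List.ofFn F).length := by simp
  have htake : (List.ofFn F).take i = (List.ofFn G).take i := by
    refine List.ext_getElem (by simp) fun t h₁ _ => ?_
    simp only [List.getElem_take, List.getElem_ofFn]
    simp only [List.length_take, List.length_ofFn] at h₁
    exact hFG _ (Fin.ne_of_lt (by simp [Fin.lt_def]; omega))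
      (Fin.ne_of_lt (by simp [Fin.lt_def]; omega))
  have hdrop : (List.ofFn F).drop (i + 2) = (List.ofFn G).drop (i + 2) := by
    refine List.ext_getElem (by simp) fun t _ _ => ?_
    simp only [List.getElem_drop, List.getElem_ofFn]
    exact hFG _ (Fin.ne_of_gt (by simp [Fin.lt_def]; omega))
      (Fin.ne_of_gt (by simp [Fin.lt_def]; omega))
  rw [← List.prod_take_mul_prod_drop (List.ofFn F) i, List.drop_eq_getElem_cons (by omega),
    List.drop_eq_getElem_cons hi, List.prod_cons, List.prod_cons, htake, hdrop,
    List.getElem_ofFn, List.getElem_ofFn]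
  rfl

theorem sum_perm_eq_zero_of_add_mul_swap {α M : Type*} [DecidableEq α] [Fintype α]
    [AddCommMonoid M] (f : Perm α → M) {x y : α} (hxy : x ≠ y)
    (h : ∀ σ, f σ + f (σ * swap x y) = 0) : ∑ σ, f σ = 0 :=
  Finset.sum_ninvolution (· * swap x y) h
    (fun _ _ hσ => hxy (swap_eq_one_iff.mp (mul_eq_left.mp hσ)))
    (fun _ => Finset.mem_univ _) (mul_swap_mul_self x y)

section RightQuantum

variable {R : Type*} [Ring R]

def IsRightQuantum {ι κ : Type*} (B : Matrix ι κ R) : Prop :=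
  (∀ i j k, i ≠ j → B j k * B i k = B i k * B j k) ∧
  (∀ i j k l, i ≠ j → k ≠ l →
    B i k * B j l - B j k * B i l = B j l * B i k - B i l * B j k)

theorem IsRightQuantum.submatrix_id {ι κ κ' : Type*} {B : Matrix ι κ R} (hB : IsRightQuantum B)
    (g : κ' → κ) : IsRightQuantum (B.submatrix id g) := by
  refine ⟨fun i j k hij => hB.1 i j (g k) hij, fun i j k l hij _ => ?_⟩
  rcases eq_or_ne (g k) (g l) with h | h
  · simp only [Matrix.submatrix_apply, id_eq, h, hB.1 i j (g l) hij]
  · exact hB.2 i j (g k) (g l) hij h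

theorem isRightQuantum_one_sub {ι : Type*} [DecidableEq ι] {a : Matrix ι ι R}
    (ha : IsRightQuantum a) : IsRightQuantum (1 - a) := by
  refine ⟨fun i j k hij => ?_, fun i j k l hij hkl => ?_⟩
  · have h := ha.1 i j k hij
    simp only [Matrix.sub_apply, Matrix.one_apply]
    split_ifs <;> first | (exfalso; grind) | linear_combination (norm := noncomm_ring) h
  · have h := ha.2 i j k l hij hkl
    simp only [Matrix.sub_apply, Matrix.one_apply]
    split_ifs <;> first | (exfalso; grind) | linear_combination (norm := noncomm_ring) h

variable {n : ℕ}

theorem exists_prod_ofFn_eq_adjacent (B : Matrix (Fin (n + 1)) (Fin (n + 1)) R)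
    (σ : Perm (Fin (n + 1))) (i : Fin n) :
    ∃ T D : R, ∀ F : Fin (n + 1) → R,
      (∀ t, t ≠ i.castSucc → t ≠ i.succ → F t = B (σ t) t) →
        (List.ofFn F).prod = T * (F i.castSucc * (F i.succ * D)) :=
  ⟨_, _, fun F hF => List.prod_ofFn_split_adjacent F _ i hF⟩

theorem ncdet_submatrix_swap_adjacent {B : Matrix (Fin (n + 1)) (Fin (n + 1)) R}
    (hB : IsRightQuantum B) (i : Fin n) :
    ncdet (B.submatrix id (swap i.castSucc i.succ)) = -ncdet B := by
  have hne : i.castSucc ≠ i.succ := Fin.castSucc_lt_succ.ne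
  rw [eq_neg_iff_add_eq_zero, ncdet, ncdet, ← Finset.sum_add_distrib]
  refine sum_perm_eq_zero_of_add_mul_swap _ hne fun σ => ?_
  obtain ⟨T, D, hsplit⟩ := exists_prod_ofFn_eq_adjacent B σ i
  simp only [Matrix.submatrix_apply, id_eq, Perm.mul_apply]
  rw [hsplit (fun t => B (σ t) (swap _ _ t)) fun t h₁ h₂ => by
      rw [swap_apply_of_ne_of_ne h₁ h₂],
    hsplit (fun t => B (σ t) t) fun _ _ _ => rfl,
    hsplit (fun t => B (σ (swap _ _ t)) t) fun t h₁ h₂ => by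
      rw [swap_apply_of_ne_of_ne h₁ h₂],
    hsplit (fun t => B (σ (swap _ _ t)) (swap _ _ t)) fun t h₁ h₂ => by
      rw [swap_apply_of_ne_of_ne h₁ h₂]]
  simp only [swap_apply_left, swap_apply_right, Perm.sign_mul, sign_swap hne,
    mul_neg_one, Units.val_neg, zsmul_eq_mul, Int.cast_neg]
  set u := σ i.castSucc
  set v := σ i.succ
  have hrel := hB.2 u v i.castSucc i.succ (σ.injective.ne hne) hne
  calc _ = ((sign σ : ℤ) : R) * T * ((B u i.castSucc * B v i.succ - B v i.castSucc * B u i.succ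
        - (B v i.succ * B u i.castSucc - B u i.succ * B v i.castSucc)) * D) := by
          noncomm_ring
    _ = 0 := by rw [hrel, sub_self, zero_mul, mul_zero]

-- Not a consequence of the sign change under swaps, which only gives `2 • ncdet B = 0`.
theorem ncdet_eq_zero_of_adjacent_cols_eq {B : Matrix (Fin (n + 1)) (Fin (n + 1)) R}
    (hB : IsRightQuantum B) (i : Fin n) (hcol : ∀ r, B r i.succ = B r i.castSucc) :
    ncdet B = 0 := by
  have hne : i.castSucc ≠ i.succ := Fin.castSucc_lt_succ.ne
  refine sum_perm_eq_zero_of_add_mul_swap _ hne fun σ => ?_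
  obtain ⟨T, D, hsplit⟩ := exists_prod_ofFn_eq_adjacent B σ i
  simp only [Perm.mul_apply]
  rw [hsplit (fun t => B (σ t) t) fun _ _ _ => rfl,
    hsplit (fun t => B (σ (swap _ _ t)) t) fun t h₁ h₂ => by
      rw [swap_apply_of_ne_of_ne h₁ h₂]]
  simp only [swap_apply_left, swap_apply_right, Perm.sign_mul, sign_swap hne,
    mul_neg_one, Units.val_neg, zsmul_eq_mul, Int.cast_neg, hcol]
  have hcomm := hB.1 (σ i.castSucc) (σ i.succ) i.castSucc (σ.injective.ne hne)
  calc _ = ((sign σ : ℤ) : R) * T * ((B (σ i.castSucc) i.castSucc * B (σ i.succ) i.castSucc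
        - B (σ i.succ) i.castSucc * B (σ i.castSucc) i.castSucc) * D) := by
          noncomm_ring
    _ = 0 := by rw [hcomm, sub_self, zero_mul, mul_zero]

theorem ncdet_submatrix_perm {B : Matrix (Fin n) (Fin n) R} (hB : IsRightQuantum B)
    (τ : Perm (Fin n)) : ncdet (B.submatrix id τ) = (sign τ : ℤ) • ncdet B := by
  cases n with
  | zero => simp [Subsingleton.elim τ 1]
  | succ n =>
    have hτ : τ ∈ Submonoid.closure (Set.range fun i : Fin n => swap i.castSucc i.succ) := by
      rw [mclosure_swap_castSucc_succ]; trivial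
    induction hτ using Submonoid.closure_induction generalizing B with
    | mem _ hs =>
      obtain ⟨i, rfl⟩ := hs
      rw [ncdet_submatrix_swap_adjacent hB, sign_swap Fin.castSucc_lt_succ.ne]
      simp
    | one => simp
    | mul σ τ _ _ hσ hτ =>
      rw [Perm.coe_mul,
        show B.submatrix id (σ ∘ τ) = (B.submatrix id σ).submatrix id τ from rfl,
        hτ (hB.submatrix_id σ), hσ hB, Perm.sign_mul, mul_comm, Units.val_mul, mul_smul]

theorem ncdet_eq_zero_of_cols_eq {B : Matrix (Fin n) (Fin n) R} (hB : IsRightQuantum B)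
    {c c' : Fin n} (hcc' : c ≠ c') (hcol : ∀ r, B r c = B r c') : ncdet B = 0 := by
  wlog hlt : c < c' generalizing c c'
  · exact this hcc'.symm (fun r => (hcol r).symm) (lt_of_le_of_ne (not_lt.mp hlt) hcc'.symm)
  obtain ⟨k, rfl⟩ : ∃ k, n = k + 1 := ⟨n - 1, by omega⟩
  set i : Fin k := ⟨c, by omega⟩
  have hci : i.castSucc = c := rfl
  have hτ : ncdet (B.submatrix id (swap i.succ c')) = 0 := by
    refine ncdet_eq_zero_of_adjacent_cols_eq (hB.submatrix_id _) i fun r => ?_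
    simp only [Matrix.submatrix_apply, id_eq, swap_apply_left, hci]
    rw [swap_apply_of_ne_of_ne (hci ▸ Fin.castSucc_lt_succ.ne) hcc', hcol]
  rwa [ncdet_submatrix_perm hB, (Units.isUnit _).smul_eq_zero] at hτ

end RightQuantum

section LastColumn

variable {m : ℕ}

def succAboveLastPerm (k : Fin (m + 1)) : Perm (Fin (m + 1)) :=
  (Fin.cycleRange k)⁻¹ * Fin.cycleRange (Fin.last m)

@[simp]
theorem succAboveLastPerm_last (k : Fin (m + 1)) : succAboveLastPerm k (Fin.last m) = k := by
  simp [succAboveLastPerm, Perm.inv_def]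

@[simp]
theorem succAboveLastPerm_castSucc (k : Fin (m + 1)) (t : Fin m) :
    succAboveLastPerm k t.castSucc = k.succAbove t := by
  simp [succAboveLastPerm, Perm.inv_def]

theorem sign_succAboveLastPerm (k : Fin (m + 1)) :
    sign (succAboveLastPerm k) = (-1) ^ ((k : ℕ) + m) := by
  simp [succAboveLastPerm, pow_add]

def extendLast (π : Perm (Fin m)) : Perm (Fin (m + 1)) :=
  finSuccEquivLast.symm.permCongr π.optionCongr

@[simp]
theorem extendLast_last (π : Perm (Fin m)) : extendLast π (Fin.last m) = Fin.last m := by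
  simp [extendLast, Equiv.permCongr_apply]

@[simp]
theorem extendLast_castSucc (π : Perm (Fin m)) (t : Fin m) :
    extendLast π t.castSucc = (π t).castSucc := by
  simp [extendLast, Equiv.permCongr_apply]

@[simp]
theorem sign_extendLast (π : Perm (Fin m)) : sign (extendLast π) = sign π := by
  rw [extendLast, sign_permCongr, optionCongr_sign]

theorem bijective_succAboveLastPerm_mul_extendLast :
    Function.Bijective fun kπ : Fin (m + 1) × Perm (Fin m) =>
      succAboveLastPerm kπ.1 * extendLast kπ.2 := by
  rw [Fintype.bijective_iff_injective_and_card]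
  refine ⟨fun ⟨k, π⟩ ⟨k', π'⟩ h => ?_,
    by simp [Fintype.card_perm, Nat.factorial_succ]⟩
  obtain rfl : k = k' := by simpa using congrArg (· (Fin.last m)) h
  have hπ : extendLast π = extendLast π' := mul_left_cancel h
  congr 1
  ext t : 1
  simpa using congrArg (· t.castSucc) hπ

variable {R : Type*} [Ring R]

theorem ncdet_succ_column_last (M : Matrix (Fin (m + 1)) (Fin (m + 1)) R) :
    ncdet M = ∑ k : Fin (m + 1), ((-1 : ℤ) ^ ((k : ℕ) + m)) •
      (ncdet (M.submatrix k.succAbove Fin.castSucc) * M k (Fin.last m)) := by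
  rw [ncdet, ← (Equiv.ofBijective _ bijective_succAboveLastPerm_mul_extendLast).sum_comp,
    Fintype.sum_prod_type]
  refine Finset.sum_congr rfl fun k _ => ?_
  rw [ncdet, Finset.sum_mul, Finset.smul_sum]
  refine Finset.sum_congr rfl fun π _ => ?_
  simp only [Equiv.ofBijective_apply, Perm.sign_mul, sign_extendLast, sign_succAboveLastPerm,
    List.ofFn_succ', List.prod_concat, Perm.mul_apply, extendLast_castSucc, extendLast_last,
    succAboveLastPerm_castSucc, succAboveLastPerm_last, Matrix.submatrix_apply]
  rw [smul_mul_assoc, smul_smul]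
  push_cast
  rfl

end LastColumn

section Adjugate

variable {R : Type*} [Ring R] {m : ℕ}

theorem neg_one_pow_add_mul_neg_one_pow_add (a b c : ℕ) :
    (-1 : ℤ) ^ (a + c) * (-1) ^ (b + c) = (-1) ^ (a + b) := by
  rw [← pow_add, show a + c + (b + c) = a + b + 2 * c by ring, pow_add, pow_mul]
  simp

theorem ncdet_succ_column {B : Matrix (Fin (m + 1)) (Fin (m + 1)) R} (hB : IsRightQuantum B)
    (i : Fin (m + 1)) :
    ncdet B = ∑ k : Fin (m + 1), ((-1 : ℤ) ^ ((i : ℕ) + k)) •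
      (ncdet (B.submatrix k.succAbove i.succAbove) * B k i) := by
  have hexp := ncdet_succ_column_last (B.submatrix id (succAboveLastPerm i))
  rw [ncdet_submatrix_perm hB, sign_succAboveLastPerm] at hexp
  push_cast at hexp
  simp only [Matrix.submatrix_submatrix, Function.comp_def, succAboveLastPerm_castSucc,
    Matrix.submatrix_apply, id_eq, succAboveLastPerm_last] at hexp
  calc ncdet B = (-1 : ℤ) ^ ((i : ℕ) + m) • ((-1 : ℤ) ^ ((i : ℕ) + m) • ncdet B) := by
        rw [smul_smul, neg_one_pow_add_mul_neg_one_pow_add, ← two_mul, pow_mul]; simp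
    _ = _ := by
        simp only [hexp, Finset.smul_sum, smul_smul, neg_one_pow_add_mul_neg_one_pow_add]

noncomputable def ncadjugate (B : Matrix (Fin (m + 1)) (Fin (m + 1)) R) :
    Matrix (Fin (m + 1)) (Fin (m + 1)) R :=
  Matrix.of fun i k =>
    ((-1 : ℤ) ^ ((i : ℕ) + k)) • ncdet (B.submatrix k.succAbove i.succAbove)

theorem ncadjugate_mul {B : Matrix (Fin (m + 1)) (Fin (m + 1)) R} (hB : IsRightQuantum B) :
    ncadjugate B * B = Matrix.diagonal fun _ => ncdet B := by
  ext i j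
  simp only [Matrix.mul_apply, Matrix.diagonal_apply, ncadjugate, Matrix.of_apply,
    smul_mul_assoc]
  split_ifs with hij
  · subst hij
    rw [ncdet_succ_column hB i]
  · rw [← ncdet_eq_zero_of_cols_eq (hB.submatrix_id (Function.update id i j)) hij
      fun r => by simp [Ne.symm hij], ncdet_succ_column (hB.submatrix_id _) i]
    refine Finset.sum_congr rfl fun k _ => ?_
    congr 3
    · ext r t
      simp [Fin.succAbove_ne]
    · simp

end Adjugate

theorem right_quantum_inverse_entries_general {R : Type*} [Ring R] (m : ℕ)
    (a : Matrix (Fin (m + 1)) (Fin (m + 1)) R)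
    (hrq1 : ∀ i j k : Fin (m + 1), i ≠ j → a j k * a i k = a i k * a j k)
    (hrq2 : ∀ i j k l : Fin (m + 1), i ≠ j → k ≠ l →
      a i k * a j l - a j k * a i l = a j l * a i k - a i l * a j k)
    (X : Matrix (Fin (m + 1)) (Fin (m + 1)) R)
    (hX1 : (1 - a) * X = 1)
    (d : R) (hd1 : d * ncdet (1 - a) = 1) :
    ∀ i j : Fin (m + 1),
      X i j = ((-1 : ℤ) ^ ((i : ℕ) + (j : ℕ))) •
        (d * ncdet ((1 - a).submatrix j.succAbove i.succAbove)) := by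
  have hB : IsRightQuantum (1 - a) := isRightQuantum_one_sub ⟨hrq1, hrq2⟩
  have hleft : d • ncadjugate (1 - a) * (1 - a) = 1 := by
    rw [Matrix.smul_mul, ncadjugate_mul hB]
    ext i j
    rw [Matrix.smul_apply, Matrix.diagonal_apply, Matrix.one_apply]
    split_ifs <;> simp [hd1]
  have hX : X = d • ncadjugate (1 - a) :=
    calc X = d • ncadjugate (1 - a) * (1 - a) * X := by rw [hleft, Matrix.one_mul]
      _ = d • ncadjugate (1 - a) := by rw [Matrix.mul_assoc, hX1, Matrix.mul_one]
  intro i j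
  rw [hX, Matrix.smul_apply, ncadjugate, Matrix.of_apply, smul_eq_mul, mul_smul_comm]

/-- Right-quantum inversion formula: for a right-quantum matrix `A`
with `X` a two-sided inverse of `I - A`
and `d` a two-sided inverse of `det (I - A)` (both exist in the completed algebra),
`((I-A)⁻¹)_{ij} = (-1)^{i+j} (det (I-A))⁻¹ · det ((I-A)^{ji})`,
where `(I-A)^{ji}` is `I - A` with row `j` and column `i` removed. -/
theorem right_quantum_inverse_entries {R : Type*} [Ring R] (m : ℕ)
    (a : Matrix (Fin (m + 1)) (Fin (m + 1)) R)
    (hrq1 : ∀ i j k : Fin (m + 1), i ≠ j → a j k * a i k = a i k * a j k)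
    (hrq2 : ∀ i j k l : Fin (m + 1), i ≠ j → k ≠ l →
      a i k * a j l - a j k * a i l = a j l * a i k - a i l * a j k)
    (X : Matrix (Fin (m + 1)) (Fin (m + 1)) R)
    (hX1 : (1 - a) * X = 1) (hX2 : X * (1 - a) = 1)
    (d : R) (hd1 : d * ncdet (1 - a) = 1) (hd2 : ncdet (1 - a) * d = 1) :
    ∀ i j : Fin (m + 1),
      X i j = ((-1 : ℤ) ^ ((i : ℕ) + (j : ℕ))) •
        (d * ncdet ((1 - a).submatrix j.succAbove i.succAbove)) :=
  right_quantum_inverse_entries_general m a hrq1 hrq2 X hX1 d hd1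
end

section
/- Let 𝐪 = (q_{ij})_{i<j} be nonzero complex numbers (extended by q_{ii}=1, q_{ji}=q_{ij}^{-1}) and let I_{𝐪-cf} be the ideal of the free algebra generated by the 𝐪-Cartier-Foata relations q_{kl}a_{jl}a_{ik} = q_{ij}a_{ik}a_{jl} (i ≠ j). For words λ = λ₁ i j λ₂ and μ = μ₁ k l μ₂ with i < j, let λ' = λ₁ j i λ₂ and μ' = μ₁ l k μ₂ (transposing the two adjacent letters in the same positions). Then w(λ,μ)·a_{λ,μ} ≡ w(λ',μ')·a_{λ',μ'} modulo I_{𝐪-cf}, where w(λ,μ) = ∏_{(r,s)∈Inv(μ)} q_{μ_s μ_r} · ∏_{(r,s)∈Inv(λ)} q_{λ_s λ_r}^{-1} and a_{λ,μ} = a_{λ₁μ₁}⋯a_{λ_ℓμ_ℓ}. -/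
/-- `∏_{(r,s) ∈ Inv(ν)} f ν_s ν_r`, the product of `f` over the inversions of the word
`ν` (pairs of positions `r < s` with `ν_r > ν_s`). -/
noncomputable def invProd {m : ℕ} (f : Fin m → Fin m → ℂ) (ν : List (Fin m)) : ℂ :=
  ∏ p ∈ Finset.univ.filter
      (fun p : Fin ν.length × Fin ν.length => p.1 < p.2 ∧ ν.get p.2 < ν.get p.1),
    f (ν.get p.2) (ν.get p.1)

/-- The weight `w(λ, μ) = ∏_{(r,s)∈Inv(μ)} q_{μ_s μ_r} · ∏_{(r,s)∈Inv(λ)} q_{λ_s λ_r}⁻¹`. -/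
noncomputable def qWeight {m : ℕ} (Q : Fin m → Fin m → ℂ) (lam mu : List (Fin m)) : ℂ :=
  invProd Q mu * invProd (fun x y => (Q x y)⁻¹) lam

/-- The word `a_{λ,μ} = a_{λ₁μ₁} a_{λ₂μ₂} ⋯`. -/
def wordProd {m : ℕ} {R : Type*} [Ring R] (b : Fin m → Fin m → R)
    (lam mu : List (Fin m)) : R :=
  (List.zipWith b lam mu).prod

/-!
Splitting off the first letter, `invProd f (a :: ν)` is `invProd f ν` times the product of
`f x a` over the letters `x < a` of `ν`, and that factor only depends on `ν` up to
permutation. So transposing adjacent letters `x < y` changes an inversion product by exactly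
`f x y`, and the weight changes by `q_{kl} q_{ij}⁻¹` (for `k > l` through `q_{lk} = q_{kl}⁻¹`,
for `k = l` through `q_{kk} = 1`). The `𝐪`-Cartier–Foata relation for the two transposed
variables, multiplied on both sides by the rest of the word, says that the word changes by
the inverse factor.
-/

section InversionProduct

variable {m : ℕ} (f : Fin m → Fin m → ℂ)

noncomputable def lowerProd (a : Fin m) (ν : List (Fin m)) : ℂ :=
  (ν.map fun x => if x < a then f x a else 1).prod

lemma lowerProd_cons (a x : Fin m) (ν : List (Fin m)) :
    lowerProd f a (x :: ν) = (if x < a then f x a else 1) * lowerProd f a ν := by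
  simp [lowerProd]

lemma lowerProd_perm {a : Fin m} {ν ν' : List (Fin m)} (h : ν.Perm ν') :
    lowerProd f a ν = lowerProd f a ν' :=
  (h.map _).prod_eq

lemma invProd_eq_prod_ite (ν : List (Fin m)) :
    invProd f ν = ∏ r : Fin ν.length, ∏ s : Fin ν.length,
      if r < s ∧ ν[s] < ν[r] then f ν[s] ν[r] else 1 := by
  rw [invProd, Finset.prod_filter, Fintype.prod_prod_type]
  rfl

theorem invProd_cons (a : Fin m) (ν : List (Fin m)) :
    invProd f (a :: ν) = lowerProd f a ν * invProd f ν := by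
  rw [invProd_eq_prod_ite, invProd_eq_prod_ite, lowerProd, ← Fin.prod_univ_fun_getElem]
  simp [Fin.prod_univ_succ, Fin.succ_lt_succ_iff, Fin.succ_pos]

theorem invProd_append_swap_of_lt (ν₁ ν₂ : List (Fin m)) {x y : Fin m} (hxy : x < y) :
    invProd f (ν₁ ++ y :: x :: ν₂) = f x y * invProd f (ν₁ ++ x :: y :: ν₂) := by
  induction ν₁ with
  | nil =>
    simp only [List.nil_append, invProd_cons, lowerProd_cons, if_pos hxy, if_neg hxy.asymm]
    ring
  | cons a ν₁ ih =>
    simp only [List.cons_append, invProd_cons, ih,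
      lowerProd_perm f (List.Perm.append_left ν₁ (List.Perm.swap x y ν₂))]
    ring

end InversionProduct

section Weight

variable {m : ℕ} {Q : Fin m → Fin m → ℂ}

theorem invProd_append_swap (hQ0 : ∀ i j, Q i j ≠ 0) (hQ1 : ∀ i, Q i i = 1)
    (hQ2 : ∀ i j, Q j i = (Q i j)⁻¹) (ν₁ ν₂ : List (Fin m)) (x y : Fin m) :
    invProd Q (ν₁ ++ y :: x :: ν₂) = Q x y * invProd Q (ν₁ ++ x :: y :: ν₂) := by
  rcases lt_trichotomy x y with hxy | rfl | hyx
  · exact invProd_append_swap_of_lt Q ν₁ ν₂ hxy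
  · rw [hQ1, one_mul]
  · rw [invProd_append_swap_of_lt Q ν₁ ν₂ hyx, hQ2 y x, inv_mul_cancel_left₀ (hQ0 y x)]

theorem qWeight_append_swap (hQ0 : ∀ i j, Q i j ≠ 0) (hQ1 : ∀ i, Q i i = 1)
    (hQ2 : ∀ i j, Q j i = (Q i j)⁻¹) (lam₁ lam₂ mu₁ mu₂ : List (Fin m)) {i j : Fin m}
    (hij : i < j) (k l : Fin m) :
    qWeight Q (lam₁ ++ j :: i :: lam₂) (mu₁ ++ l :: k :: mu₂) =
      Q k l * (Q i j)⁻¹ * qWeight Q (lam₁ ++ i :: j :: lam₂) (mu₁ ++ k :: l :: mu₂) := by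
  rw [qWeight, qWeight, invProd_append_swap hQ0 hQ1 hQ2,
    invProd_append_swap_of_lt _ lam₁ lam₂ hij]
  ring

end Weight

section WordProd

variable {m : ℕ} {R : Type*} [Ring R] (b : Fin m → Fin m → R)

theorem wordProd_append_cons_cons {lam₁ mu₁ : List (Fin m)} (h : lam₁.length = mu₁.length)
    (x y u v : Fin m) (lam₂ mu₂ : List (Fin m)) :
    wordProd b (lam₁ ++ x :: y :: lam₂) (mu₁ ++ u :: v :: mu₂) =
      wordProd b lam₁ mu₁ * (b x u * b y v) * wordProd b lam₂ mu₂ := by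
  simp only [wordProd, List.zipWith_append h, List.zipWith_cons_cons, List.prod_append,
    List.prod_cons, mul_assoc]

theorem smul_wordProd_append_swap [Algebra ℂ R] {lam₁ mu₁ : List (Fin m)}
    (h : lam₁.length = mu₁.length) {x y u v : Fin m} {c d : ℂ}
    (hb : d • (b y v * b x u) = c • (b x u * b y v)) (lam₂ mu₂ : List (Fin m)) :
    d • wordProd b (lam₁ ++ y :: x :: lam₂) (mu₁ ++ v :: u :: mu₂) =
      c • wordProd b (lam₁ ++ x :: y :: lam₂) (mu₁ ++ u :: v :: mu₂) := by
  rw [wordProd_append_cons_cons b h, wordProd_append_cons_cons b h, ← smul_mul_assoc,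
    ← mul_smul_comm, hb, mul_smul_comm, smul_mul_assoc]

end WordProd

theorem q_cartier_foata_weight_swap_general (m : ℕ)
    (Q : Fin m → Fin m → ℂ) (hQ0 : ∀ i j, Q i j ≠ 0)
    (hQ1 : ∀ i, Q i i = 1) (hQ2 : ∀ i j, Q j i = (Q i j)⁻¹)
    (lam₁ lam₂ mu₁ mu₂ : List (Fin m)) (i j k l : Fin m) (hij : i < j)
    (hlen₁ : lam₁.length = mu₁.length) :
    ∀ (R : Type) [Ring R] [Algebra ℂ R] (b : Fin m → Fin m → R),
      (∀ i' j' k' l' : Fin m, i' ≠ j' →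
        (Q k' l') • (b j' l' * b i' k') = (Q i' j') • (b i' k' * b j' l')) →
      qWeight Q (lam₁ ++ i :: j :: lam₂) (mu₁ ++ k :: l :: mu₂) •
          wordProd b (lam₁ ++ i :: j :: lam₂) (mu₁ ++ k :: l :: mu₂) =
        qWeight Q (lam₁ ++ j :: i :: lam₂) (mu₁ ++ l :: k :: mu₂) •
          wordProd b (lam₁ ++ j :: i :: lam₂) (mu₁ ++ l :: k :: mu₂) := by
  intro R _ _ b hb
  have hword := smul_wordProd_append_swap b hlen₁ (hb i j k l hij.ne) lam₂ mu₂
  rw [qWeight_append_swap hQ0 hQ1 hQ2 lam₁ lam₂ mu₁ mu₂ hij k l]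
  set w := qWeight Q (lam₁ ++ i :: j :: lam₂) (mu₁ ++ k :: l :: mu₂)
  set W := wordProd b (lam₁ ++ i :: j :: lam₂) (mu₁ ++ k :: l :: mu₂)
  set W' := wordProd b (lam₁ ++ j :: i :: lam₂) (mu₁ ++ l :: k :: mu₂)
  calc w • W = ((Q i j)⁻¹ * w) • (Q i j • W) := by
        rw [smul_smul, mul_right_comm, inv_mul_cancel₀ (hQ0 i j), one_mul]
    _ = (Q k l * (Q i j)⁻¹ * w) • W' := by
        rw [← hword, smul_smul]
        congr 1
        ring

/-- Modulo the `𝐪`-Cartier–Foata ideal `I_{𝐪-cf}` (generated by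
`q_{kl} a_{jl} a_{ik} - q_{ij} a_{ik} a_{jl}` for `i ≠ j`), the weighted word
`w(λ,μ) a_{λ,μ}` is invariant under transposing a pair of adjacent letters with distinct
row indices `i < j` in `λ` together with the letters in the same positions of `μ`
(all three cases `k < l`, `k > l`, `k = l` are covered).  Working modulo the ideal is
expressed by quantifying over all `ℂ`-algebras `R` and all interpretations `b` of the
variables satisfying the `𝐪`-Cartier–Foata relations. -/
theorem q_cartier_foata_weight_swap (m : ℕ)
    (Q : Fin m → Fin m → ℂ) (hQ0 : ∀ i j, Q i j ≠ 0)
    (hQ1 : ∀ i, Q i i = 1) (hQ2 : ∀ i j, Q j i = (Q i j)⁻¹)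
    (lam₁ lam₂ mu₁ mu₂ : List (Fin m)) (i j k l : Fin m) (hij : i < j)
    (hlen₁ : lam₁.length = mu₁.length) (hlen₂ : lam₂.length = mu₂.length) :
    ∀ (R : Type) [Ring R] [Algebra ℂ R] (b : Fin m → Fin m → R),
      (∀ i' j' k' l' : Fin m, i' ≠ j' →
        (Q k' l') • (b j' l' * b i' k') = (Q i' j') • (b i' k' * b j' l')) →
      qWeight Q (lam₁ ++ i :: j :: lam₂) (mu₁ ++ k :: l :: mu₂) •
          wordProd b (lam₁ ++ i :: j :: lam₂) (mu₁ ++ k :: l :: mu₂) =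
        qWeight Q (lam₁ ++ j :: i :: lam₂) (mu₁ ++ l :: k :: mu₂) •
          wordProd b (lam₁ ++ j :: i :: lam₂) (mu₁ ++ l :: k :: mu₂) :=
  q_cartier_foata_weight_swap_general m Q hQ0 hQ1 hQ2 lam₁ lam₂ mu₁ mu₂ i j k l hij hlen₁
end

section
/- Let I_{q-rtq} be the ideal of the free algebra on a_{ij} generated by the q-right-quantum relations a_{jk}a_{ik} - q a_{ik}a_{jk} (i<j) and a_{ik}a_{jl} - q^{-1}a_{jk}a_{il} - a_{jl}a_{ik} + q a_{il}a_{jk} (i<j, k<l). For words λ = λ₁ i j λ₂, μ = μ₁ k l μ₂ with i < j, and λ' = λ₁ j i λ₂, μ' = μ₁ l k μ₂, one has q^{inv μ - inv λ} a_{λ,μ} + q^{inv μ' - inv λ} a_{λ,μ'} ≡ q^{inv μ - inv λ'} a_{λ',μ} + q^{inv μ' - inv λ'} a_{λ',μ'} modulo I_{q-rtq}. -/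
/-- The number of inversions of a word: pairs of positions `r < s` with `ν_r > ν_s`. -/
def invCount {m : ℕ} (ν : List (Fin m)) : ℕ :=
  (Finset.univ.filter
    (fun p : Fin ν.length × Fin ν.length => p.1 < p.2 ∧ ν.get p.2 < ν.get p.1)).card

/-!
Cut each of the four words `a_{λ,μ}`, … at the swapped positions: all of them are
`a_{λ₁,μ₁} · x · a_{λ₂,μ₂}` with `x` a product of two generators, so it suffices to prove the
identity for the two-letter words `ij`, `kl`. Swapping two adjacent letters changes the
inversion count of a word by the same amount as it changes that of the two letters alone, so
the four exponents differ from the two-letter ones by a common shift. The two-letter identity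
is then the second defining relation for `(k, l)` if `k < l` and for `(l, k)` if `l < k`, and
the first defining relation if `k = l`.
-/

theorem sum_ite_get_lt_eq_countP {m : ℕ} (a : Fin m) (t : List (Fin m)) :
    (∑ r : Fin t.length, if t.get r < a then 1 else 0) = t.countP (· < a) := by
  induction t with
  | nil => simp
  | cons c t ih =>
    rw [List.countP_cons]
    simp only [List.length_cons, Fin.sum_univ_succ, List.get_cons_succ']
    rw [ih]
    by_cases h : c < a <;> simp [h, add_comm]

theorem invCount_cons {m : ℕ} (a : Fin m) (t : List (Fin m)) :
    invCount (a :: t) = t.countP (· < a) + invCount t := by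
  have h_sum : ∀ ν : List (Fin m), invCount ν =
      ∑ r : Fin ν.length, ∑ s : Fin ν.length, if r < s ∧ ν.get s < ν.get r then 1 else 0 := by
    intro ν
    rw [invCount, Finset.card_filter, ← Fintype.sum_prod_type']
  rw [h_sum (a :: t), h_sum t]
  simp only [List.length_cons, Fin.sum_univ_succ]
  rw [← sum_ite_get_lt_eq_countP a t]
  simp [Fin.succ_lt_succ_iff]

theorem invCount_pair {m : ℕ} (x y : Fin m) : invCount [x, y] = if y < x then 1 else 0 := by
  rw [invCount_cons, invCount_cons]
  simp [invCount]

theorem invCount_append_swap {m : ℕ} (x y : Fin m) (c₁ c₂ : List (Fin m)) :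
    invCount (c₁ ++ x :: y :: c₂) + invCount [y, x] =
      invCount (c₁ ++ y :: x :: c₂) + invCount [x, y] := by
  induction c₁ with
  | nil =>
    simp only [List.nil_append, invCount_cons, List.countP_cons]
    rcases lt_trichotomy x y with h | rfl | h
    · simp [h, h.not_gt]; omega
    · rfl
    · simp [h, h.not_gt]; omega
  | cons a c₁ ih =>
    have hperm : (c₁ ++ x :: y :: c₂).Perm (c₁ ++ y :: x :: c₂) :=
      (List.Perm.swap _ _ _).symm.append_left _
    rw [List.cons_append, List.cons_append, invCount_cons a, invCount_cons a, hperm.countP_eq]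
    omega

theorem wordProd_append_cons_cons_s14 {m : ℕ} {R : Type*} [Ring R] (b : Fin m → Fin m → R)
    (c₁ c₂ d₁ d₂ : List (Fin m)) (x y u v : Fin m) (h₁ : c₁.length = d₁.length) :
    wordProd b (c₁ ++ x :: y :: c₂) (d₁ ++ u :: v :: d₂) =
      wordProd b c₁ d₁ * (b x u * b y v) * wordProd b c₂ d₂ := by
  simp [wordProd, List.zipWith_append h₁, List.prod_append, mul_assoc]

theorem smul_mul_mul_add_smul_mul_mul {K R : Type*} [CommSemiring K] [Semiring R] [Algebra K R]
    (c d : K) (P M N S : R) :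
    c • (P * M * S) + d • (P * N * S) = P * (c • M + d • N) * S := by
  rw [mul_add, add_mul, mul_smul_comm, mul_smul_comm, smul_mul_assoc, smul_mul_assoc]

theorem qRightQuantum_weight_swap_pair {K R : Type*} [Field K] [Ring R] [Algebra K R] {m : ℕ}
    {q : K} (hq : q ≠ 0) {b : Fin m → Fin m → R}
    (rel₁ : ∀ i j k : Fin m, i < j → b j k * b i k = q • (b i k * b j k))
    (rel₂ : ∀ i j k l : Fin m, i < j → k < l →
      b i k * b j l - q⁻¹ • (b j k * b i l) = b j l * b i k - q • (b i l * b j k))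
    {i j : Fin m} (hij : i < j) (k l : Fin m) {e₁ e₂ e₃ e₄ : ℤ}
    (h₂ : e₂ + invCount [k, l] = e₁ + invCount [l, k]) (h₃ : e₃ = e₁ - 1) (h₄ : e₄ = e₂ - 1) :
    q ^ e₁ • (b i k * b j l) + q ^ e₂ • (b i l * b j k) =
      q ^ e₃ • (b j k * b i l) + q ^ e₄ • (b j l * b i k) := by
  subst h₃ h₄
  simp only [invCount_pair] at h₂
  rcases lt_trichotomy k l with hkl | rfl | hkl
  · obtain rfl : e₂ = e₁ + 1 := by simp [hkl, hkl.not_gt] at h₂; omega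
    rw [add_sub_cancel_right, zpow_add_one₀ hq, zpow_sub_one₀ hq]
    linear_combination (norm := module) q ^ e₁ • rel₂ i j k l hij hkl
  · obtain rfl : e₁ = e₂ := by simpa using h₂.symm
    obtain ⟨n, rfl⟩ : ∃ n : ℤ, e₁ = n + 1 := ⟨e₁ - 1, by ring⟩
    rw [add_sub_cancel_right, zpow_add_one₀ hq]
    linear_combination (norm := module) (-2 * q ^ n) • rel₁ i j k hij
  · obtain rfl : e₂ = e₁ - 1 := by simp [hkl, hkl.not_gt] at h₂; omega
    obtain ⟨n, rfl⟩ : ∃ n : ℤ, e₁ = n + 1 := ⟨e₁ - 1, by ring⟩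
    rw [add_sub_cancel_right, zpow_add_one₀ hq, zpow_sub_one₀ hq]
    linear_combination (norm := module) q ^ n • rel₂ i j l k hij hkl

theorem q_right_quantum_weight_swap_general (m : ℕ) (q : ℂ) (hq : q ≠ 0)
    (lam₁ lam₂ mu₁ mu₂ : List (Fin m)) (i j k l : Fin m) (hij : i < j)
    (hlen₁ : lam₁.length = mu₁.length) :
    ∀ (R : Type) [Ring R] [Algebra ℂ R] (b : Fin m → Fin m → R),
      (∀ i' j' k' : Fin m, i' < j' → b j' k' * b i' k' = q • (b i' k' * b j' k')) →
      (∀ i' j' k' l' : Fin m, i' < j' → k' < l' →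
        b i' k' * b j' l' - q⁻¹ • (b j' k' * b i' l') =
          b j' l' * b i' k' - q • (b i' l' * b j' k')) →
      (let lam := lam₁ ++ i :: j :: lam₂
       let lam' := lam₁ ++ j :: i :: lam₂
       let mu := mu₁ ++ k :: l :: mu₂
       let mu' := mu₁ ++ l :: k :: mu₂
       (q ^ ((invCount mu : ℤ) - (invCount lam : ℤ))) • wordProd b lam mu +
           (q ^ ((invCount mu' : ℤ) - (invCount lam : ℤ))) • wordProd b lam mu' =
         (q ^ ((invCount mu : ℤ) - (invCount lam' : ℤ))) • wordProd b lam' mu +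
           (q ^ ((invCount mu' : ℤ) - (invCount lam' : ℤ))) • wordProd b lam' mu') := by
  intro R _ _ b rel₁ rel₂
  have h_lam := invCount_append_swap i j lam₁ lam₂
  have h_mu := invCount_append_swap l k mu₁ mu₂
  simp only [invCount_pair, if_pos hij, if_neg hij.not_gt] at h_lam
  simp only [wordProd_append_cons_cons_s14 b _ lam₂ _ mu₂ _ _ _ _ hlen₁,
    smul_mul_mul_add_smul_mul_mul]
  congr 2
  exact qRightQuantum_weight_swap_pair hq rel₁ rel₂ hij k l (by omega) (by omega) (by omega)

/-- Modulo the `q`-right-quantum ideal `I_{q-rtq}` (generated by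
`a_{jk}a_{ik} - q a_{ik}a_{jk}` for `i < j` and
`a_{ik}a_{jl} - q⁻¹ a_{jk}a_{il} - a_{jl}a_{ik} + q a_{il}a_{jk}` for `i < j`, `k < l`),
for words `λ = λ₁ i j λ₂`, `μ = μ₁ k l μ₂` with `i < j`, and `λ' = λ₁ j i λ₂`,
`μ' = μ₁ l k μ₂`, one has
`q^{inv μ - inv λ} a_{λ,μ} + q^{inv μ' - inv λ} a_{λ,μ'}
  = q^{inv μ - inv λ'} a_{λ',μ} + q^{inv μ' - inv λ'} a_{λ',μ'}`.
Working modulo the ideal is expressed by quantifying over all `ℂ`-algebras `R` and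
interpretations `b` of the variables satisfying the `q`-right-quantum relations. -/
theorem q_right_quantum_weight_swap (m : ℕ) (q : ℂ) (hq : q ≠ 0)
    (lam₁ lam₂ mu₁ mu₂ : List (Fin m)) (i j k l : Fin m) (hij : i < j)
    (hlen₁ : lam₁.length = mu₁.length) (hlen₂ : lam₂.length = mu₂.length) :
    ∀ (R : Type) [Ring R] [Algebra ℂ R] (b : Fin m → Fin m → R),
      (∀ i' j' k' : Fin m, i' < j' → b j' k' * b i' k' = q • (b i' k' * b j' k')) →
      (∀ i' j' k' l' : Fin m, i' < j' → k' < l' →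
        b i' k' * b j' l' - q⁻¹ • (b j' k' * b i' l') =
          b j' l' * b i' k' - q • (b i' l' * b j' k')) →
      (let lam := lam₁ ++ i :: j :: lam₂
       let lam' := lam₁ ++ j :: i :: lam₂
       let mu := mu₁ ++ k :: l :: mu₂
       let mu' := mu₁ ++ l :: k :: mu₂
       (q ^ ((invCount mu : ℤ) - (invCount lam : ℤ))) • wordProd b lam mu +
           (q ^ ((invCount mu' : ℤ) - (invCount lam : ℤ))) • wordProd b lam mu' =
         (q ^ ((invCount mu : ℤ) - (invCount lam' : ℤ))) • wordProd b lam' mu +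
           (q ^ ((invCount mu' : ℤ) - (invCount lam' : ℤ))) • wordProd b lam' mu') :=
  q_right_quantum_weight_swap_general m q hq lam₁ lam₂ mu₁ mu₂ i j k l hij hlen₁
end

section
/- In the free monoid on steps a_{ij} (1 ≤ i,j ≤ m), every balanced sequence whose disjoint cycle decomposition is u₁u₂⋯u_k, placed into β ∈ ℕ slots so that the product over slots reproduces the sequence modulo the Cartier-Foata relations and each slot is a term of (det(I-C))^{-1} (i.e. a concatenation of paths from n+1 to n+1, then n+2 to n+2, etc., in heights > n with excursions below), must place all steps of any single cycle u_i into the same slot. -/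
open scoped Classical

/-- Lattice steps: a step `(i, j)` goes from height `i` to height `j` (0-indexed). -/
abbrev Step (m : ℕ) := Fin m × Fin m

/-- The Cartier–Foata congruence on sequences of steps: generated by transposing two
adjacent steps with distinct starting heights (`a_{ik} a_{jl} = a_{jl} a_{ik}` for
`i ≠ j`). -/
def CFeq {m : ℕ} : List (Step m) → List (Step m) → Prop :=
  Relation.EqvGen (fun w₁ w₂ => ∃ u v x y, Prod.fst x ≠ Prod.fst y ∧
    w₁ = u ++ x :: y :: v ∧ w₂ = u ++ y :: x :: v)

/-- A disjoint cycle: a nonempty lattice path from some height back to itself in which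
each height occurs at most once as a starting height. -/
def IsDisjointCycle {m : ℕ} (P : List (Step m)) : Prop :=
  P ≠ [] ∧ P.Chain' (fun s t => s.2 = t.1) ∧
    (∀ x ∈ P.head?, ∀ y ∈ P.getLast?, y.2 = x.1) ∧
    (P.map Prod.fst).Nodup

/-- A term of `(det (I - C))⁻¹`, i.e. a word which is the concatenation of a lattice path
from `n+1` to `n+1`, then a path from `n+2` to `n+2` avoiding height `n+1`, …, and
finally a path from `m` to `m` avoiding heights `n+1, …, m-1` (0-indexed: the `t`-th path
goes from height `n+t` to itself using only heights `< n` or `≥ n+t`). -/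
def ValidTerm (m n : ℕ) (w : List (Step m)) : Prop :=
  ∃ P : Fin (m - n) → List (Step m),
    w = (List.ofFn P).flatten ∧
    ∀ t : Fin (m - n),
      (P t).Chain' (fun s u => s.2 = u.1) ∧
      (∀ x ∈ (P t).head?, (x.1 : ℕ) = n + (t : ℕ)) ∧
      (∀ x ∈ (P t).getLast?, (x.2 : ℕ) = n + (t : ℕ)) ∧
      (∀ s ∈ P t, ((s.1 : ℕ) < n ∨ n + (t : ℕ) ≤ (s.1 : ℕ)) ∧
        ((s.2 : ℕ) < n ∨ n + (t : ℕ) ≤ (s.2 : ℕ)))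

/-!
Read the steps of a cycle in order. Each step lies in some slot and, inside the term of that
slot, in the path of some level `t`, which runs from height `n + t` back to itself through
heights `< n` or `≥ n + t`. As the cycle leaves every height at most once, a step whose slot
differs from that of the previous step cannot continue a path of its own slot: it opens the path
of its level at the current height. That height is at least `n + t` for the previous level `t`,
and differs from `n + t`, which the cycle has already left; so the level increases strictly at
every change of slot and never decreases otherwise. The cycle ends at the height `n + t₀` where
its first step opened a path, which no level above `t₀` reaches; hence the slot never changes.
Removing the first cycle from its slot leaves terms again, and induction over the cycles
concludes.
-/

theorem List.getElem_mem_take_drop {α : Type*} {l : List α} {S len r : ℕ} (h₁ : S ≤ r)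
    (h₂ : r < S + len) (hr : r < l.length) : l[r] ∈ (l.drop S).take len := by
  rw [List.mem_iff_getElem]
  refine ⟨r - S, by simp; omega, ?_⟩
  simp only [List.getElem_take, List.getElem_drop]
  congr 1
  omega

namespace CycleSlots

variable {m n : ℕ}

inductive LatticePath : ℕ → List (Step m) → ℕ → Prop
  | nil (h : ℕ) : LatticePath h [] h
  | cons {s : Step m} {w : List (Step m)} {h h' : ℕ} :
      (s.1 : ℕ) = h → LatticePath s.2 w h' → LatticePath h (s :: w) h'

theorem latticePath_of_isChain :
    ∀ (p : List (Step m)) (h h' : ℕ), p.IsChain (fun s t => s.2 = t.1) →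
      (∀ x ∈ p.head?, (x.1 : ℕ) = h) → (∀ x ∈ p.getLast?, (x.2 : ℕ) = h') →
      (p = [] → h = h') → LatticePath h p h'
  | [], h, _, _, _, _, hnil => hnil rfl ▸ .nil h
  | s :: p, _, h', hchain, hhead, hlast, _ => by
    rw [List.isChain_cons] at hchain
    refine .cons (hhead s rfl) (latticePath_of_isChain p _ h' hchain.2 ?_ ?_ ?_)
    · exact fun x hx => congrArg Fin.val (hchain.1 x hx).symm
    · cases p with
      | nil => simp
      | cons t p => rwa [List.getLast?_cons_cons] at hlast
    · rintro rfl
      exact hlast s rfl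

theorem IsDisjointCycle.latticePath {s : Step m} {w : List (Step m)}
    (hc : IsDisjointCycle (s :: w)) : LatticePath s.2 w s.1 := by
  obtain ⟨-, hchain, hclosed, -⟩ := hc
  have hpath := latticePath_of_isChain (s :: w) s.1 s.1 hchain (by simp)
    (fun y hy => congrArg Fin.val (hclosed s rfl y hy)) (fun _ => rfl)
  cases hpath with
  | cons _ hw => exact hw

/-- `TermTail n t h w`: the word `w` completes a term of `(det (I - C))⁻¹` when reading has
reached height `h` inside the path of level `t` (the one from `n + t` to itself). Only the
starting height of each step is constrained; this is all the argument needs. -/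
inductive TermTail (n : ℕ) : ℕ → ℕ → List (Step m) → Prop
  | nil (t : ℕ) : TermTail n t (n + t) []
  | cont {t h : ℕ} {s : Step m} {w : List (Step m)} :
      (s.1 : ℕ) = h → (h < n ∨ n + t ≤ h) → TermTail n t s.2 w → TermTail n t h (s :: w)
  | next {t t' h : ℕ} {s : Step m} {w : List (Step m)} :
      t < t' → h = n + t → (s.1 : ℕ) = n + t' → TermTail n t' s.2 w →
        TermTail n t h (s :: w)

def IsTerm (n : ℕ) (w : List (Step m)) : Prop := ∃ t, TermTail n t (n + t) w

namespace TermTail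

theorem le_height {t h : ℕ} {w : List (Step m)} (hw : TermTail n t h w) (hh : n ≤ h) :
    n + t ≤ h := by
  cases hw with
  | nil => rfl
  | cont _ hadm _ => omega
  | next _ hh' _ _ => omega

theorem of_le {t t' : ℕ} {w : List (Step m)} (htt : t ≤ t') (hw : TermTail n t' (n + t') w) :
    TermTail n t (n + t) w := by
  obtain rfl | hlt := eq_or_lt_of_le htt
  · exact hw
  cases hw with
  | nil => exact .nil t
  | cont hs _ hw' => exact .next hlt rfl hs hw'
  | next hlt' _ hs hw' => exact .next (hlt.trans hlt') rfl hs hw'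

theorem of_cons {t h : ℕ} {s : Step m} {w : List (Step m)} (hs : (s.1 : ℕ) = h)
    (hw : TermTail n t h (s :: w)) : TermTail n t s.2 w := by
  cases hw with
  | cont _ _ hw' => exact hw'
  | next hlt hh hs' _ => omega

theorem append_path {t h h' : ℕ} {p w : List (Step m)} (hp : LatticePath h p h')
    (hadm : ∀ s ∈ p, (s.1 : ℕ) < n ∨ n + t ≤ s.1) (hw : TermTail n t h' w) :
    TermTail n t h (p ++ w) := by
  induction hp with
  | nil => exact hw
  | cons hs _ ih =>
    exact .cont hs (hs ▸ hadm _ List.mem_cons_self)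
      (ih (fun s hs' => hadm s (List.mem_cons_of_mem _ hs')) hw)

theorem of_append_path {t h h' : ℕ} {p w : List (Step m)} (hp : LatticePath h p h')
    (hw : TermTail n t h (p ++ w)) : TermTail n t h' w := by
  induction hp with
  | nil => exact hw
  | cons hs _ ih => exact ih (of_cons hs hw)

end TermTail

theorem termTail_flatten_ofFn : ∀ {N : ℕ} (P : Fin N → List (Step m)) (t₀ : ℕ),
    (∀ i : Fin N, LatticePath (n + (t₀ + i)) (P i) (n + (t₀ + i)) ∧
      ∀ s ∈ P i, (s.1 : ℕ) < n ∨ n + (t₀ + i) ≤ s.1) →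
    TermTail n t₀ (n + t₀) (List.ofFn P).flatten
  | 0, _, t₀, _ => by simpa using .nil t₀
  | N + 1, P, t₀, hP => by
    rw [List.ofFn_succ, List.flatten_cons]
    have h0 := hP 0
    simp only [Fin.val_zero, add_zero] at h0
    refine .append_path h0.1 h0.2
      (.of_le (Nat.le_succ t₀) (termTail_flatten_ofFn _ _ fun i => ?_))
    simpa [add_assoc, add_comm 1] using hP i.succ

theorem isTerm_of_validTerm {w : List (Step m)} (h : ValidTerm m n w) : IsTerm n w := by
  obtain ⟨P, rfl, hP⟩ := h
  refine ⟨0, termTail_flatten_ofFn P 0 fun i => ?_⟩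
  obtain ⟨hchain, hhead, hlast, hadm⟩ := hP i
  simp only [zero_add]
  exact ⟨latticePath_of_isChain _ _ _ hchain hhead hlast fun _ => rfl,
    fun s hs => (hadm s hs).1⟩

/-- The unread part `w` of a slot other than the current one: either it is about to open the
path of some level, or its reading stopped at a height in `V`. -/
def Resumable (n : ℕ) (V : Set ℕ) (w : List (Step m)) : Prop :=
  ∃ t h, TermTail n t h w ∧ (h = n + t ∨ h ∈ V)

theorem IsTerm.resumable {V : Set ℕ} {w : List (Step m)} (hw : IsTerm n w) :
    Resumable n V w :=
  let ⟨t, ht⟩ := hw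
  ⟨t, _, ht, .inl rfl⟩

theorem Resumable.mono {V V' : Set ℕ} {w : List (Step m)} (hV : V ⊆ V')
    (hw : Resumable n V w) : Resumable n V' w :=
  let ⟨t, h, ht, hh⟩ := hw
  ⟨t, h, ht, hh.imp_right (@hV h)⟩

theorem Resumable.cons {V : Set ℕ} {s : Step m} {w : List (Step m)}
    (hw : Resumable n V (s :: w)) (hs : (s.1 : ℕ) ∉ V) :
    ∃ t, (s.1 : ℕ) = n + t ∧ TermTail n t s.2 w := by
  obtain ⟨t, h, ht, hh⟩ := hw
  cases ht with
  | cont hsh _ hw' =>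
    subst hsh
    exact ⟨t, hh.resolve_right hs, hw'⟩
  | next _ _ hs' hw' => exact ⟨_, hs', hw'⟩

theorem IsTerm.cons {s : Step m} {w : List (Step m)} (hw : IsTerm n (s :: w)) :
    ∃ t, (s.1 : ℕ) = n + t ∧ TermTail n t s.2 w :=
  (hw.resumable (V := ∅)).cons (Set.notMem_empty _)

theorem IsTerm.of_cycle_append {u w : List (Step m)} (hc : IsDisjointCycle u)
    (hw : IsTerm n (u ++ w)) : IsTerm n w := by
  obtain ⟨s, v, rfl⟩ := List.exists_cons_of_ne_nil hc.1
  obtain ⟨t, hs, ht⟩ := hw.cons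
  exact ⟨t, hs ▸ ht.of_append_path (IsDisjointCycle.latticePath hc)⟩

section Slots

variable {β : Type*} [DecidableEq β]

def slotWord (b : β) (Z : List (Step m × β)) : List (Step m) :=
  (Z.filter (·.2 = b)).map Prod.fst

theorem slotWord_cons_of_eq {b : β} {x : Step m × β} (Z : List (Step m × β)) (h : x.2 = b) :
    slotWord b (x :: Z) = x.1 :: slotWord b Z := by
  simp [slotWord, h]

theorem slotWord_cons_of_ne {b : β} {x : Step m × β} (Z : List (Step m × β)) (h : x.2 ≠ b) :
    slotWord b (x :: Z) = slotWord b Z := by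
  simp [slotWord, h]

theorem slotWord_append (b : β) (Z₁ Z₂ : List (Step m × β)) :
    slotWord b (Z₁ ++ Z₂) = slotWord b Z₁ ++ slotWord b Z₂ := by
  simp [slotWord]

/-- The state reached while reading a cycle: `V` holds the heights the cycle has already left,
the current step lies in slot `b`, in the path of level `T`, and ends at height `h`. -/
def ReadingState (n : ℕ) (V : Set ℕ) (b : β) (T h : ℕ) (Z : List (Step m × β)) : Prop :=
  n + T ∈ V ∧ TermTail n T h (slotWord b Z) ∧ ∀ e ≠ b, Resumable n V (slotWord e Z)

theorem ReadingState.cons {V : Set ℕ} {b : β} {T h : ℕ} {x : Step m × β}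
    {Z : List (Step m × β)} (hs : ReadingState n V b T h (x :: Z)) (hxh : (x.1.1 : ℕ) = h)
    (hhV : h ∉ V) :
    ∃ T', T ≤ T' ∧ (T' = T → x.2 = b) ∧ ReadingState n (insert h V) x.2 T' x.1.2 Z := by
  obtain ⟨hT, hb, hothers⟩ := hs
  have hothers' (e : β) (he : e ≠ b) (hxe : x.2 ≠ e) :
      Resumable n (insert h V) (slotWord e Z) := by
    have := hothers e he
    rw [slotWord_cons_of_ne _ hxe] at this
    exact this.mono (Set.subset_insert _ _)
  by_cases hxb : x.2 = b
  · subst hxb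
    rw [slotWord_cons_of_eq _ rfl] at hb
    exact ⟨T, le_rfl, fun _ => rfl, Set.mem_insert_of_mem _ hT, hb.of_cons hxh,
      fun e he => hothers' e he he.symm⟩
  · have hx := hothers x.2 hxb
    rw [slotWord_cons_of_eq _ rfl] at hx
    obtain ⟨τ, hτ, hτt⟩ := hx.cons (hxh ▸ hhV)
    rw [slotWord_cons_of_ne _ hxb] at hb
    have hTτ : T < τ := by
      have := hb.le_height (by omega)
      have : n + T ≠ h := fun e => hhV (e ▸ hT)
      omega
    refine ⟨τ, hTτ.le, fun e => absurd e hTτ.ne', hxh ▸ hτ ▸ Set.mem_insert _ _, hτt,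
      fun e he => ?_⟩
    by_cases heb : e = b
    · exact heb ▸ ⟨T, h, hb, .inr (Set.mem_insert _ _)⟩
    · exact hothers' e heb he.symm

theorem ReadingState.exists_level_le {V : Set ℕ} {b : β} {T h h' : ℕ}
    {Z₁ Z₂ : List (Step m × β)} (hs : ReadingState n V b T h (Z₁ ++ Z₂))
    (hp : LatticePath h (Z₁.map Prod.fst) h') (hnd : (Z₁.map fun x => (x.1.1 : ℕ)).Nodup)
    (hV : ∀ x ∈ Z₁, (x.1.1 : ℕ) ∉ V) :
    ∃ T' b', T ≤ T' ∧ TermTail n T' h' (slotWord b' Z₂) ∧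
      (T' = T → ∀ x ∈ Z₁, x.2 = b) := by
  induction Z₁ generalizing V b T h with
  | nil =>
    cases hp
    exact ⟨T, b, le_rfl, hs.2.1, by simp⟩
  | cons x Z₁ ih =>
    obtain _ | ⟨hxh, hp⟩ := hp
    rw [List.map_cons, List.nodup_cons] at hnd
    have hhV : h ∉ V := hxh ▸ hV x List.mem_cons_self
    have hV' (y) (hy : y ∈ Z₁) : (y.1.1 : ℕ) ∉ insert h V := by
      rintro (hyh | hyV)
      · exact hnd.1 (hxh ▸ hyh ▸ List.mem_map_of_mem hy)
      · exact hV y (List.mem_cons_of_mem _ hy) hyV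
    obtain ⟨T₁, hT₁, hb, hs₁⟩ := ReadingState.cons hs hxh hhV
    obtain ⟨T', b', hT', ht, hall⟩ := ih hs₁ hp hnd.2 hV'
    refine ⟨T', b', hT₁.trans hT', ht, fun hT => ?_⟩
    have hT₁T : T₁ = T := by omega
    exact List.forall_mem_cons.2 ⟨hb hT₁T, fun y hy => hb hT₁T ▸ hall (by omega) y hy⟩

theorem exists_slot_of_isDisjointCycle {Z₁ Z₂ : List (Step m × β)}
    (hc : IsDisjointCycle (Z₁.map Prod.fst))
    (hterm : ∀ b, IsTerm n (slotWord b (Z₁ ++ Z₂))) :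
    ∃ b, ∀ x ∈ Z₁, x.2 = b := by
  obtain ⟨x, Z₁, rfl⟩ := List.exists_cons_of_ne_nil (List.map_eq_nil_iff.not.mp hc.1)
  have hx := hterm x.2
  rw [List.cons_append, slotWord_cons_of_eq _ rfl] at hx
  obtain ⟨T, hT, ht⟩ := hx.cons
  have hs : ReadingState n {(x.1.1 : ℕ)} x.2 T x.1.2 (Z₁ ++ Z₂) := by
    refine ⟨hT ▸ rfl, ht, fun e he => ?_⟩
    have := hterm e
    rw [List.cons_append, slotWord_cons_of_ne _ he.symm] at this
    exact this.resumable
  have hnd := hc.2.2.2.map Fin.val_injective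
  simp only [List.map_cons, List.map_map, List.nodup_cons, List.mem_map, Function.comp_apply,
    not_exists, not_and] at hnd
  obtain ⟨T', b', hle, ht', hall⟩ := hs.exists_level_le (IsDisjointCycle.latticePath hc) hnd.2
    fun y hy hyx => hnd.1 y hy hyx
  have := ht'.le_height (by omega)
  exact ⟨x.2, List.forall_mem_cons.2 ⟨rfl, hall (by omega)⟩⟩

theorem isTerm_slotWord_of_cycle_append {Z₁ Z₂ : List (Step m × β)} {b₀ : β}
    (hc : IsDisjointCycle (Z₁.map Prod.fst)) (hb₀ : ∀ x ∈ Z₁, x.2 = b₀)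
    (hterm : ∀ b, IsTerm n (slotWord b (Z₁ ++ Z₂))) (b : β) :
    IsTerm n (slotWord b Z₂) := by
  have hb := hterm b
  rw [slotWord_append] at hb
  by_cases h : b = b₀
  · subst h
    have hZ₁ : slotWord b Z₁ = Z₁.map Prod.fst := by
      simp [slotWord, List.filter_eq_self.2 fun x hx => decide_eq_true (hb₀ x hx)]
    exact .of_cycle_append hc (hZ₁ ▸ hb)
  · have hZ₁ : slotWord b Z₁ = [] := by
      simp only [slotWord, List.map_eq_nil_iff, List.filter_eq_nil_iff, decide_eq_true_eq]
      exact fun x hx => (hb₀ x hx).symm ▸ Ne.symm h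
    rwa [hZ₁, List.nil_append] at hb

theorem exists_slot_of_mem_cycles : ∀ (U : List (List (Step m))) (Z : List (Step m × β)),
    (∀ v ∈ U, IsDisjointCycle v) → Z.map Prod.fst = U.flatten →
    (∀ b, IsTerm n (slotWord b Z)) → ∀ c (hc : c < U.length),
    ∃ b, ∀ x ∈ (Z.drop ((U.map List.length).take c).sum).take U[c].length, x.2 = b
  | [], _, _, _, _, _, hc => absurd hc (Nat.not_lt_zero _)
  | u :: U, Z, hU, hZ, hterm, c, hc => by
    have hZ₁ : (Z.take u.length).map Prod.fst = u := by
      rw [List.map_take, hZ, List.flatten_cons, List.take_left' rfl]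
    have hZ₂ : (Z.drop u.length).map Prod.fst = U.flatten := by
      rw [List.map_drop, hZ, List.flatten_cons, List.drop_left' rfl]
    rw [← List.take_append_drop u.length Z] at hterm
    have hu := hZ₁ ▸ hU u List.mem_cons_self
    obtain ⟨b₀, hb₀⟩ := exists_slot_of_isDisjointCycle hu hterm
    cases c with
    | zero => exact ⟨b₀, by simpa using hb₀⟩
    | succ c =>
      have := exists_slot_of_mem_cycles U _ (fun v hv => hU v (List.mem_cons_of_mem _ hv)) hZ₂
        (isTerm_slotWord_of_cycle_append hu hb₀ hterm) c (by simpa using hc)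
      simpa [List.drop_drop, add_comm] using this

end Slots

end CycleSlots

theorem cycle_steps_in_same_slot_general (m n : ℕ) (β k : ℕ)
    (u : Fin k → List (Step m))
    (hu : ∀ c, IsDisjointCycle (u c)) :
    let L : List (Step m) := (List.ofFn u).flatten
    -- the sequence is balanced
    (∀ h : Fin m, (L.map Prod.fst).count h = (L.map Prod.snd).count h) →
    ∀ g : Fin L.length → Fin β,
      -- the word placed in each slot (the steps assigned to it, in order)
      (∀ b : Fin β,
        ValidTerm m n
          (((List.finRange L.length).filter (fun p => g p = b)).map (fun p => L.get p))) →
      -- the concatenation over the slots reproduces the sequence modulo Cartier–Foata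
      CFeq
        ((List.ofFn fun b : Fin β =>
          ((List.finRange L.length).filter (fun p => g p = b)).map
            (fun p => L.get p)).flatten) L →
      -- conclusion: the placement is constant on each cycle
      ∀ c : Fin k, ∀ p q : Fin L.length,
        (∑ c' ∈ Finset.univ.filter (· < c), (u c').length) ≤ (p : ℕ) →
        (p : ℕ) < (∑ c' ∈ Finset.univ.filter (· < c), (u c').length) + (u c).length →
        (∑ c' ∈ Finset.univ.filter (· < c), (u c').length) ≤ (q : ℕ) →
        (q : ℕ) < (∑ c' ∈ Finset.univ.filter (· < c), (u c').length) + (u c).length →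
        g p = g q := by
  intro L _ g hslots _ c p q hp₁ hp₂ hq₁ hq₂
  set Z := (List.finRange L.length).map fun p => (L.get p, g p)
  have hZ : Z.map Prod.fst = (List.ofFn u).flatten := by
    rw [List.map_map]
    exact List.map_get_finRange L
  have hterm (b : Fin β) : CycleSlots.IsTerm n (CycleSlots.slotWord b Z) := by
    rw [CycleSlots.slotWord, List.filter_map, List.map_map]
    exact CycleSlots.isTerm_of_validTerm (hslots b)
  obtain ⟨b, hb⟩ := CycleSlots.exists_slot_of_mem_cycles (List.ofFn u) Z
    (by simpa [List.mem_ofFn] using fun c => hu c) hZ hterm c (by simp)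
  set S := ∑ c' ∈ Finset.univ.filter (· < c), (u c').length
  have hS : (((List.ofFn u).map List.length).take c).sum = S := by
    rw [List.map_ofFn, List.sum_take_ofFn]
    rfl
  rw [hS, List.getElem_ofFn] at hb
  have hslot (r : Fin L.length) (h₁ : S ≤ r) (h₂ : r < S + (u c).length) : g r = b := by
    simpa [Z] using hb _ (List.getElem_mem_take_drop h₁ h₂ (by simp [Z]))
  rw [hslot p hp₁ hp₂, hslot q hq₁ hq₂]

/-- Lemma 10.1-type statement: if a balanced sequence with disjoint cycle decomposition
`u₁ u₂ ⋯ u_k` is placed into `β` slots — i.e. each step is assigned a slot, the word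
read off in each slot is a term of `(det (I - C))⁻¹`, and the concatenation of the slot
words is Cartier–Foata congruent to the original sequence — then all steps of any single
cycle `u_c` are placed in the same slot. -/
theorem cycle_steps_in_same_slot (m n : ℕ) (hn : n < m) (β k : ℕ)
    (u : Fin k → List (Step m))
    (hu : ∀ c, IsDisjointCycle (u c)) :
    let L : List (Step m) := (List.ofFn u).flatten
    -- the sequence is balanced
    (∀ h : Fin m, (L.map Prod.fst).count h = (L.map Prod.snd).count h) →
    ∀ g : Fin L.length → Fin β,
      -- the word placed in each slot (the steps assigned to it, in order)
      (∀ b : Fin β,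
        ValidTerm m n
          (((List.finRange L.length).filter (fun p => g p = b)).map (fun p => L.get p))) →
      -- the concatenation over the slots reproduces the sequence modulo Cartier–Foata
      CFeq
        ((List.ofFn fun b : Fin β =>
          ((List.finRange L.length).filter (fun p => g p = b)).map
            (fun p => L.get p)).flatten) L →
      -- conclusion: the placement is constant on each cycle
      ∀ c : Fin k, ∀ p q : Fin L.length,
        (∑ c' ∈ Finset.univ.filter (· < c), (u c').length) ≤ (p : ℕ) →
        (p : ℕ) < (∑ c' ∈ Finset.univ.filter (· < c), (u c').length) + (u c).length →
        (∑ c' ∈ Finset.univ.filter (· < c), (u c').length) ≤ (q : ℕ) →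
        (q : ℕ) < (∑ c' ∈ Finset.univ.filter (· < c), (u c').length) + (u c).length →
        g p = g q :=
  cycle_steps_in_same_slot_general m n β k u hu
end
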